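/- Let $H_1, \ldots, H_N$ be independent exponential random variables with pairwise distinct positive means and $\mathcal{K}$ a disjoint set of independent exponentials with positive means. For fixed $\gamma_{th} > 0$ and $\sigma_z^2 \geq 0$, the success probability $\sum_{n \in \mathcal{N}} e^{-\gamma_{th}\sigma_z^2/P_n} \prod_{j \neq n} \frac{P_n}{P_n - P_j} \prod_{k \in \mathcal{K}} \frac{P_n}{P_k\gamma_{th} + P_n}$ lies in the interval $[0, 1]$. -/

import Mathlib

/-!
With rates `xₙ = 1 / Pₙ`, the sum `∑ₙ (∏_{j ≠ n} xⱼ / (xⱼ - xₙ)) e^{-xₙ t}` is the survival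
function `ℙ(X₁ + ⋯ + X_N > t)` of a sum of independent exponentials (the hypoexponential law).
It lies in `[0, 1]` for `t ≥ 0` by induction on the rates, via the convolution identity
`F_{s ∪ {a}}(t) = e^{-xₐ t} + ∫₀ᵗ xₐ e^{-xₐ v} F_s(t - v) dv`; its boundary term is the
Lagrange interpolation identity `∑ₙ ∏_{j ≠ n} xⱼ / (xⱼ - xₙ) = 1` (interpolate `1` at `0`).
Each interference factor `Pₙ / (Qₖ γ + Pₙ) = (1 + γ Qₖ xₙ)⁻¹ = ∫₀^∞ e^{-u} e^{-xₙ γ Qₖ u} du`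
then averages the survival function over the shifts `t ↦ t + γ Qₖ u` against the probability
density `e^{-u}`, which preserves `[0, 1]`; here `t = γ σ²`.
-/

open Finset Real MeasureTheory

theorem inv_div_inv_sub_inv {K : Type*} [Field K] {a b : K} (ha : a ≠ 0) (hb : b ≠ 0) :
    b⁻¹ / (b⁻¹ - a⁻¹) = a / (a - b) := by
  rcases eq_or_ne a b with rfl | hab
  · simp
  · field_simp [sub_ne_zero.mpr hab, sub_ne_zero.mpr hab.symm]

theorem inv_one_add_mul_inv {K : Type*} [Field K] {a : K} (c : K) (ha : a ≠ 0) :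
    (1 + c * a⁻¹)⁻¹ = a / (c + a) := by
  rw [← div_self ha, div_add' _ _ _ ha, inv_mul_cancel_right₀ ha, inv_div, add_comm]

noncomputable def expPoly {ι : Type*} (s : Finset ι) (c x : ι → ℝ) (t : ℝ) : ℝ :=
  ∑ i ∈ s, c i * exp (-(x i * t))

theorem integral_exp_neg_mul_interval {y : ℝ} (hy : y ≠ 0) (t : ℝ) :
    ∫ v in (0 : ℝ)..t, exp (-(y * v)) = (1 - exp (-(y * t))) / y := by
  simp only [← neg_mul]
  rw [intervalIntegral.integral_comp_mul_left exp (neg_ne_zero.mpr hy), integral_exp, mul_zero,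
    exp_zero, smul_eq_mul]
  field_simp
  ring

theorem integrableOn_exp_neg_mul_Ioi {y : ℝ} (hy : 0 < y) :
    IntegrableOn (fun u => exp (-(y * u))) (Set.Ioi 0) := by
  simpa only [neg_mul] using integrableOn_exp_mul_Ioi (neg_lt_zero.mpr hy) 0

theorem integral_exp_neg_mul_Ioi {y : ℝ} (hy : 0 < y) :
    ∫ u in Set.Ioi 0, exp (-(y * u)) = y⁻¹ := by
  simp only [← neg_mul]
  rw [integral_exp_mul_Ioi (neg_lt_zero.mpr hy), mul_zero, exp_zero, neg_div_neg_eq, one_div]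

section ExpPoly

variable {ι : Type*} (s : Finset ι) (c x : ι → ℝ)

@[fun_prop]
theorem continuous_expPoly : Continuous (expPoly s c x) := by
  unfold expPoly; fun_prop

theorem integral_expPoly_interval (hx : ∀ i ∈ s, x i ≠ 0) (t : ℝ) :
    ∫ v in (0 : ℝ)..t, expPoly s c x v = ∑ i ∈ s, c i * (1 - exp (-(x i * t))) / x i := by
  unfold expPoly
  rw [intervalIntegral.integral_finsetSum fun i _ =>
    (by fun_prop : Continuous _).intervalIntegrable _ _]
  refine sum_congr rfl fun i hi => ?_
  rw [intervalIntegral.integral_const_mul, integral_exp_neg_mul_interval (hx i hi), mul_div_assoc]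

theorem integrableOn_expPoly_Ioi (hx : ∀ i ∈ s, 0 < x i) :
    IntegrableOn (expPoly s c x) (Set.Ioi 0) :=
  integrable_finsetSum s fun i hi => (integrableOn_exp_neg_mul_Ioi (hx i hi)).const_mul _

theorem integral_expPoly_Ioi (hx : ∀ i ∈ s, 0 < x i) :
    ∫ u in Set.Ioi 0, expPoly s c x u = ∑ i ∈ s, c i / x i := by
  unfold expPoly
  rw [integral_finsetSum s fun i hi => (integrableOn_exp_neg_mul_Ioi (hx i hi)).const_mul _]
  refine sum_congr rfl fun i hi => ?_
  rw [integral_const_mul, integral_exp_neg_mul_Ioi (hx i hi), div_eq_mul_inv]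

theorem exp_neg_mul_expPoly_add (t b u : ℝ) :
    exp (-u) * expPoly s c x (t + b * u)
      = expPoly s (fun i => c i * exp (-(x i * t))) (fun i => 1 + b * x i) u := by
  unfold expPoly
  rw [mul_sum]
  refine sum_congr rfl fun i _ => ?_
  have h : exp (-u) * exp (-(x i * (t + b * u)))
      = exp (-(x i * t)) * exp (-((1 + b * x i) * u)) := by
    rw [← exp_add, ← exp_add]; ring_nf
  linear_combination c i * h

theorem mul_exp_neg_mul_expPoly_sub (y t v : ℝ) :
    y * exp (-(y * v)) * expPoly s c x (t - v)
      = expPoly s (fun i => y * c i * exp (-(x i * t))) (fun i => y - x i) v := by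
  unfold expPoly
  rw [mul_sum]
  refine sum_congr rfl fun i _ => ?_
  have h : exp (-(y * v)) * exp (-(x i * (t - v)))
      = exp (-(x i * t)) * exp (-((y - x i) * v)) := by
    rw [← exp_add, ← exp_add]; ring_nf
  linear_combination y * c i * h

theorem expPoly_mul_inv_eq_integral {b : ℝ} (hb : ∀ i ∈ s, 0 < 1 + b * x i) (t : ℝ) :
    expPoly s (fun i => c i * (1 + b * x i)⁻¹) x t
      = ∫ u in Set.Ioi 0, exp (-u) * expPoly s c x (t + b * u) := by
  simp_rw [exp_neg_mul_expPoly_add]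
  rw [integral_expPoly_Ioi _ _ _ hb]
  unfold expPoly
  exact sum_congr rfl fun i _ => by ring

theorem expPoly_mul_inv_mem_Icc {b : ℝ} (hb : 0 ≤ b) (hx : ∀ i ∈ s, 0 ≤ x i)
    (hc : ∀ t, 0 ≤ t → expPoly s c x t ∈ Set.Icc 0 1) {t : ℝ} (ht : 0 ≤ t) :
    expPoly s (fun i => c i * (1 + b * x i)⁻¹) x t ∈ Set.Icc 0 1 := by
  have hpos : ∀ i ∈ s, 0 < 1 + b * x i := fun i hi => by nlinarith [hx i hi]
  have hbound : ∀ u ∈ Set.Ioi (0 : ℝ),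
      exp (-u) * expPoly s c x (t + b * u) ∈ Set.Icc 0 (exp (-u)) := fun u hu => by
    obtain ⟨h0, h1⟩ := hc (t + b * u) (by nlinarith [Set.mem_Ioi.mp hu])
    exact ⟨mul_nonneg (exp_pos _).le h0, mul_le_of_le_one_right (exp_pos _).le h1⟩
  have hint : IntegrableOn (fun u => exp (-u) * expPoly s c x (t + b * u)) (Set.Ioi 0) := by
    simp_rw [exp_neg_mul_expPoly_add]
    exact integrableOn_expPoly_Ioi _ _ _ hpos
  rw [expPoly_mul_inv_eq_integral s c x hpos]
  refine ⟨setIntegral_nonneg measurableSet_Ioi fun u hu => (hbound u hu).1, ?_⟩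
  calc _ ≤ ∫ u in Set.Ioi 0, exp (-u) :=
        setIntegral_mono_on hint (integrableOn_exp_neg_Ioi 0) measurableSet_Ioi
          fun u hu => (hbound u hu).2
    _ = 1 := integral_exp_neg_Ioi_zero

theorem expPoly_mul_prod_inv_mem_Icc {κ : Type*} [DecidableEq κ] (K : Finset κ) {a : κ → ℝ}
    (ha : ∀ k ∈ K, 0 ≤ a k) (hx : ∀ i ∈ s, 0 ≤ x i)
    (hc : ∀ t, 0 ≤ t → expPoly s c x t ∈ Set.Icc 0 1) {t : ℝ} (ht : 0 ≤ t) :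
    expPoly s (fun i => c i * ∏ k ∈ K, (1 + a k * x i)⁻¹) x t ∈ Set.Icc 0 1 := by
  induction K using Finset.induction_on generalizing t with
  | empty => simpa using hc t ht
  | insert k K hk ih =>
    have hK : ∀ i, c i * ∏ l ∈ insert k K, (1 + a l * x i)⁻¹
        = (c i * ∏ l ∈ K, (1 + a l * x i)⁻¹) * (1 + a k * x i)⁻¹ := fun i => by
      rw [prod_insert hk]; ring
    simp_rw [hK]
    exact expPoly_mul_inv_mem_Icc s _ x (ha k (mem_insert_self k K)) hx
      (fun t ht => ih (fun l hl => ha l (mem_insert_of_mem hl)) ht) ht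

end ExpPoly

section Hypoexponential

variable {ι : Type*} [DecidableEq ι]

noncomputable def hypoexpCoeff (s : Finset ι) (x : ι → ℝ) (i : ι) : ℝ :=
  ∏ j ∈ s.erase i, x j / (x j - x i)

noncomputable def hypoexpSurvival (s : Finset ι) (x : ι → ℝ) : ℝ → ℝ :=
  expPoly s (hypoexpCoeff s x) x

theorem sum_hypoexpCoeff {s : Finset ι} {x : ι → ℝ} (hs : s.Nonempty) (hx : Set.InjOn x s) :
    ∑ i ∈ s, hypoexpCoeff s x i = 1 := by
  have h := congrArg (Polynomial.eval 0) (Lagrange.sum_basis hx hs)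
  rw [Polynomial.eval_finsetSum, Polynomial.eval_one] at h
  rw [← h]
  refine sum_congr rfl fun i _ => ?_
  rw [Lagrange.basis, Polynomial.eval_prod, hypoexpCoeff]
  refine prod_congr rfl fun j _ => ?_
  simp only [Lagrange.basisDivisor, Polynomial.eval_mul, Polynomial.eval_C, Polynomial.eval_sub,
    Polynomial.eval_X]
  rw [zero_sub, ← neg_sub (x i), div_neg, mul_neg, inv_mul_eq_div]

theorem hypoexpCoeff_insert_of_mem {s : Finset ι} {a i : ι} (x : ι → ℝ) (ha : a ∉ s)
    (hi : i ∈ s) : hypoexpCoeff (insert a s) x i = x a / (x a - x i) * hypoexpCoeff s x i := by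
  have hai : a ≠ i := fun h => ha (h ▸ hi)
  rw [hypoexpCoeff, erase_insert_of_ne hai, prod_insert fun h => ha (mem_of_mem_erase h),
    hypoexpCoeff]

@[fun_prop]
theorem continuous_hypoexpSurvival (s : Finset ι) (x : ι → ℝ) :
    Continuous (hypoexpSurvival s x) :=
  continuous_expPoly _ _ _

theorem hypoexpSurvival_insert {s : Finset ι} {a : ι} {x : ι → ℝ} (ha : a ∉ s)
    (hx : Set.InjOn x ↑(insert a s)) (t : ℝ) :
    hypoexpSurvival (insert a s) x t = exp (-(x a * t))
      + ∫ v in (0 : ℝ)..t, x a * exp (-(x a * v)) * hypoexpSurvival s x (t - v) := by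
  have hne : ∀ i ∈ s, x a - x i ≠ 0 := fun i hi h =>
    ha (hx (mem_insert_self a s) (mem_insert_of_mem hi) (sub_eq_zero.mp h) ▸ hi)
  have hsum := sum_hypoexpCoeff (insert_nonempty a s) hx
  rw [sum_insert ha, sum_congr rfl fun i hi => hypoexpCoeff_insert_of_mem x ha hi] at hsum
  have hterm : ∀ i ∈ s, x a * hypoexpCoeff s x i * exp (-(x i * t))
        * (1 - exp (-((x a - x i) * t))) / (x a - x i)
      = x a / (x a - x i) * hypoexpCoeff s x i * exp (-(x i * t))
        - x a / (x a - x i) * hypoexpCoeff s x i * exp (-(x a * t)) := fun i hi => by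
    have h : exp (-(x i * t)) * exp (-((x a - x i) * t)) = exp (-(x a * t)) := by
      rw [← exp_add]; ring_nf
    rw [← h]
    ring
  simp_rw [hypoexpSurvival, mul_exp_neg_mul_expPoly_sub]
  rw [integral_expPoly_interval _ _ _ hne, sum_congr rfl hterm, sum_sub_distrib, ← sum_mul,
    expPoly, sum_insert ha, sum_congr rfl fun i hi => by rw [hypoexpCoeff_insert_of_mem x ha hi]]
  linear_combination exp (-(x a * t)) * hsum

theorem hypoexpSurvival_mem_Icc {s : Finset ι} {x : ι → ℝ} (hx : ∀ i ∈ s, 0 < x i)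
    (hinj : Set.InjOn x s) {t : ℝ} (ht : 0 ≤ t) : hypoexpSurvival s x t ∈ Set.Icc 0 1 := by
  induction s using Finset.induction_on generalizing t with
  | empty => simp [hypoexpSurvival, expPoly]
  | insert a s ha ih =>
    have hxa := hx a (mem_insert_self a s)
    have hbound : ∀ v ∈ Set.Icc 0 t, x a * exp (-(x a * v)) * hypoexpSurvival s x (t - v)
        ∈ Set.Icc 0 (x a * exp (-(x a * v))) := fun v hv => by
      obtain ⟨h0, h1⟩ := ih (fun i hi => hx i (mem_insert_of_mem hi))
        (hinj.mono (coe_subset.mpr (subset_insert a s))) (sub_nonneg.mpr hv.2)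
      have hpos : 0 ≤ x a * exp (-(x a * v)) := by positivity
      exact ⟨mul_nonneg hpos h0, mul_le_of_le_one_right hpos h1⟩
    rw [hypoexpSurvival_insert ha hinj]
    refine ⟨add_nonneg (exp_pos _).le
      (intervalIntegral.integral_nonneg ht fun v hv => (hbound v hv).1), ?_⟩
    have hmono := intervalIntegral.integral_mono_on ht
      ((by fun_prop : Continuous _).intervalIntegrable (μ := volume) _ _)
      ((by fun_prop : Continuous fun v => x a * exp (-(x a * v))).intervalIntegrable _ _)
      fun v hv => (hbound v hv).2
    rw [intervalIntegral.integral_const_mul, integral_exp_neg_mul_interval hxa.ne',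
      mul_div_cancel₀ _ hxa.ne'] at hmono
    linarith

end Hypoexponential

theorem success_probability_in_unit_interval_general
    {N m : ℕ} (P : Fin N → ℝ) (Q : Fin m → ℝ)
    (hP : ∀ n, 0 < P n) (hdist : Function.Injective P) (hQ : ∀ k, 0 < Q k)
    (γth σz2 : ℝ) (hγ : 0 < γth) (hσ : 0 ≤ σz2) :
    0 ≤ ∑ n, Real.exp (-γth * σz2 / P n) *
          (∏ j ∈ Finset.univ.erase n, P n / (P n - P j)) *
          (∏ k, P n / (Q k * γth + P n)) ∧
      ∑ n, Real.exp (-γth * σz2 / P n) *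
          (∏ j ∈ Finset.univ.erase n, P n / (P n - P j)) *
          (∏ k, P n / (Q k * γth + P n)) ≤ 1 := by
  have hx : ∀ n ∈ univ, 0 < P⁻¹ n := fun n _ => inv_pos.mpr (hP n)
  have hclosed_form : ∑ n, exp (-γth * σz2 / P n) *
        (∏ j ∈ univ.erase n, P n / (P n - P j)) * (∏ k, P n / (Q k * γth + P n))
      = expPoly univ (fun n => hypoexpCoeff univ P⁻¹ n * ∏ k, (1 + Q k * γth * P⁻¹ n)⁻¹)
          P⁻¹ (γth * σz2) := by
    refine sum_congr rfl fun n _ => ?_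
    have hcoeff : hypoexpCoeff univ P⁻¹ n = ∏ j ∈ univ.erase n, P n / (P n - P j) :=
      prod_congr rfl fun j _ => inv_div_inv_sub_inv (hP n).ne' (hP j).ne'
    have hmix : ∏ k, (1 + Q k * γth * P⁻¹ n)⁻¹ = ∏ k, P n / (Q k * γth + P n) :=
      prod_congr rfl fun k _ => inv_one_add_mul_inv _ (hP n).ne'
    beta_reduce
    rw [hcoeff, hmix, Pi.inv_apply, neg_mul, neg_div, inv_mul_eq_div]
    ring
  rw [hclosed_form]
  exact expPoly_mul_prod_inv_mem_Icc univ _ _ univ (fun k _ => (mul_pos (hQ k) hγ).le)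
    (fun n hn => (hx n hn).le)
    (fun _ => hypoexpSurvival_mem_Icc hx (inv_injective.comp hdist).injOn) (by positivity)

/-- The closed-form success probability of Theorem 1 lies in `[0, 1]`. -/
theorem success_probability_in_unit_interval
    {N m : ℕ} (hN : 1 ≤ N) (P : Fin N → ℝ) (Q : Fin m → ℝ)
    (hP : ∀ n, 0 < P n) (hdist : Function.Injective P) (hQ : ∀ k, 0 < Q k)
    (γth σz2 : ℝ) (hγ : 0 < γth) (hσ : 0 ≤ σz2) :
    0 ≤ ∑ n, Real.exp (-γth * σz2 / P n) *
          (∏ j ∈ Finset.univ.erase n, P n / (P n - P j)) *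
          (∏ k, P n / (Q k * γth + P n)) ∧
      ∑ n, Real.exp (-γth * σz2 / P n) *
          (∏ j ∈ Finset.univ.erase n, P n / (P n - P j)) *
          (∏ k, P n / (Q k * γth + P n)) ≤ 1 :=
  success_probability_in_unit_interval_general P Q hP hdist hQ γth σz2 hγ hσ
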